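/- For every real ε > 0 there exist n ≥ 1 and a voter matrix V : Fin n → Fin 3 → Bool (three topics) in which every column has majority Y, such that the all-Y proposal has a positive number of matches and every proposal p supported by a majority of voters satisfies (number of matches of p) ≤ (5/6 + ε)·(number of matches of the all-Y proposal). That is, the upper-bound direction of r_3 = 5/6: the infimum over voter matrices with three topics of the best relative representativeness of a majority-supported proposal is at most 5/6. -/
import Mathlib

set_option maxRecDepth 20000


open Finset

/-- Number of topics on which opinion vector `v` agrees with proposal `p`. -/
def agreeCount {t : ℕ} (v p : Fin t → Bool) : ℕ :=
  (univ.filter (fun j => v j = p j)).card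

/-- Voter `v` supports proposal `p`: agreement on at least half the topics,
    i.e. `2 * |{j : v j = p j}| ≥ t`. -/
def Supports {t : ℕ} (v p : Fin t → Bool) : Prop :=
  t ≤ 2 * agreeCount v p

instance {t : ℕ} (v p : Fin t → Bool) : Decidable (Supports v p) :=
  Nat.decLe _ _

/-- Proposal `p` is supported by a majority of the voters of `V`:
    `2 * |{i : voter i supports p}| ≥ n`. -/
def MajSupported {n t : ℕ} (V : Fin n → Fin t → Bool) (p : Fin t → Bool) : Prop :=
  n ≤ 2 * (univ.filter (fun i => Supports (V i) p)).card

/-- Column `j` of `V` has majority Y: `2 * |{i : V i j = true}| ≥ n`. -/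
def ColMajority {n t : ℕ} (V : Fin n → Fin t → Bool) (j : Fin t) : Prop :=
  n ≤ 2 * (univ.filter (fun i => V i j = true)).card

/-- Number of true entries of a vector. -/
def trueCount {t : ℕ} (p : Fin t → Bool) : ℕ :=
  (univ.filter (fun j => p j = true)).card

/-- Number of matching opinions between the voters of `V` and proposal `p`. -/
def matchCount {n t : ℕ} (V : Fin n → Fin t → Bool) (p : Fin t → Bool) : ℕ :=
  (univ.filter (fun ij : Fin n × Fin t => V ij.1 ij.2 = p ij.2)).card

/-! ### Auxiliary lemmas for the construction -/

lemma agreeCount_eq (v p : Fin 3 → Bool) :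
    agreeCount v p = (if v 0 = p 0 then 1 else 0) + (if v 1 = p 1 then 1 else 0)
      + (if v 2 = p 2 then 1 else 0) := by
  rw [agreeCount, Finset.card_filter, Fin.sum_univ_three]

lemma matchCount_eq {n t : ℕ} (V : Fin n → Fin t → Bool) (p : Fin t → Bool) :
    matchCount V p = ∑ i, agreeCount (V i) p := by
  rw [matchCount, Finset.card_filter, Fintype.sum_prod_type]
  exact Finset.sum_congr rfl fun i _ => (Finset.card_filter _ _).symm

lemma sum_mod3 (B : ℕ → ℕ) (m : ℕ) :
    ∑ j ∈ Finset.range (3*m), B (j % 3) = m * (B 0 + B 1 + B 2) := by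
  induction m with
  | zero => simp
  | succ m ih =>
    have h : 3*(m+1) = 3*m + 1 + 1 + 1 := by ring
    rw [h, Finset.sum_range_succ, Finset.sum_range_succ, Finset.sum_range_succ, ih]
    have h0 : (3*m) % 3 = 0 := by omega
    have h1 : (3*m+1) % 3 = 1 := by omega
    have h2 : (3*m+1+1) % 3 = 2 := by omega
    rw [h0, h1, h2]; ring

/-- The voter matrix: `3k` all-Y voters, then `3k+3` voters each with a single Y,
    `k+1` per column. -/
def Vk (k : ℕ) : Fin (6*k+3) → Fin 3 → Bool :=
  fun i j => decide (i.1 < 3*k) || decide (i.1 % 3 = j.1)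

lemma sum_voters (k : ℕ) (F : Bool → Bool → Bool → ℕ) :
    ∑ i : Fin (6*k+3), F (Vk k i 0) (Vk k i 1) (Vk k i 2)
      = 3*k * F true true true
        + (k+1) * (F true false false + F false true false + F false false true) := by
  have h1 : ∑ i : Fin (6*k+3), F (Vk k i 0) (Vk k i 1) (Vk k i 2)
      = ∑ m ∈ Finset.range (6*k+3),
          F (decide (m < 3*k) || decide (m % 3 = 0))
            (decide (m < 3*k) || decide (m % 3 = 1))
            (decide (m < 3*k) || decide (m % 3 = 2)) :=
    Fin.sum_univ_eq_sum_range (fun m => F (decide (m < 3*k) || decide (m % 3 = 0))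
            (decide (m < 3*k) || decide (m % 3 = 1))
            (decide (m < 3*k) || decide (m % 3 = 2))) (6*k+3)
  rw [h1]
  have h2 : 6*k+3 = 3*k + (3*(k+1)) := by ring
  rw [h2, Finset.sum_range_add]
  have h3 : ∑ m ∈ Finset.range (3*k),
      F (decide (m < 3*k) || decide (m % 3 = 0))
        (decide (m < 3*k) || decide (m % 3 = 1))
        (decide (m < 3*k) || decide (m % 3 = 2)) = 3*k * F true true true := by
    rw [Finset.sum_congr rfl (fun m hm => ?_), Finset.sum_const, smul_eq_mul, Finset.card_range]
    have : m < 3*k := Finset.mem_range.mp hm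
    simp [this]
  have h4 : ∑ j ∈ Finset.range (3*(k+1)),
      F (decide (3*k + j < 3*k) || decide ((3*k + j) % 3 = 0))
        (decide (3*k + j < 3*k) || decide ((3*k + j) % 3 = 1))
        (decide (3*k + j < 3*k) || decide ((3*k + j) % 3 = 2))
      = ∑ j ∈ Finset.range (3*(k+1)),
          F (decide (j % 3 = 0)) (decide (j % 3 = 1)) (decide (j % 3 = 2)) := by
    refine Finset.sum_congr rfl (fun j _ => ?_)
    have hlt : ¬ (3*k + j < 3*k) := by omega
    have hmod : (3*k + j) % 3 = j % 3 := by omega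
    simp [hlt, hmod]
  rw [h3, h4]
  have h5 := sum_mod3 (fun r => F (decide (r = 0)) (decide (r = 1)) (decide (r = 2))) (k+1)
  simp only at h5
  rw [h5]
  simp

lemma eta3 (v : Fin 3 → Bool) : ![v 0, v 1, v 2] = v := by
  funext j; fin_cases j <;> simp

lemma matchCount_Vk (k : ℕ) (p : Fin 3 → Bool) :
    matchCount (Vk k) p =
      3*k * agreeCount ![true,true,true] p
      + (k+1) * (agreeCount ![true,false,false] p + agreeCount ![false,true,false] p
          + agreeCount ![false,false,true] p) := by
  rw [matchCount_eq]
  have h := sum_voters k (fun a b c => agreeCount ![a,b,c] p)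
  calc ∑ i, agreeCount (Vk k i) p
      = ∑ i, agreeCount ![Vk k i 0, Vk k i 1, Vk k i 2] p :=
        Finset.sum_congr rfl (fun i _ => by rw [eta3])
    _ = _ := h

lemma supcard_Vk (k : ℕ) (p : Fin 3 → Bool) :
    ((univ : Finset (Fin (6*k+3))).filter (fun i => Supports (Vk k i) p)).card =
      3*k * (if Supports ![true,true,true] p then 1 else 0)
      + (k+1) * ((if Supports ![true,false,false] p then 1 else 0)
          + (if Supports ![false,true,false] p then 1 else 0)
          + (if Supports ![false,false,true] p then 1 else 0)) := by
  rw [Finset.card_filter]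
  have h := sum_voters k (fun a b c => if Supports ![a,b,c] p then 1 else 0)
  calc ∑ i : Fin (6*k+3), (if Supports (Vk k i) p then 1 else 0)
      = ∑ i : Fin (6*k+3), (if Supports ![Vk k i 0, Vk k i 1, Vk k i 2] p then 1 else 0) :=
        Finset.sum_congr rfl (fun i _ => by rw [eta3])
    _ = _ := h

lemma colcard_Vk (k : ℕ) (j : Fin 3) :
    ((univ : Finset (Fin (6*k+3))).filter (fun i => Vk k i j = true)).card = 4*k+1 := by
  rw [Finset.card_filter]
  have h := sum_voters k (fun a b c => if (![a,b,c] : Fin 3 → Bool) j = true then 1 else 0)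
  have := calc ∑ i : Fin (6*k+3), (if Vk k i j = true then 1 else 0)
      = ∑ i : Fin (6*k+3), (if (![Vk k i 0, Vk k i 1, Vk k i 2] : Fin 3 → Bool) j = true then 1 else 0) :=
        Finset.sum_congr rfl (fun i _ => by rw [eta3])
    _ = _ := h
  rw [this]
  fin_cases j <;> simp <;> ring

/-- for every ε > 0 there is a three-topic voter matrix with all-Y column
majorities such that every majority-supported proposal has at most (5/6 + ε) times the
matches of the all-Y proposal, i.e. r_3 ≤ 5/6. -/
theorem r3_upper_bound (ε : ℝ) (hε : 0 < ε) :
    ∃ n : ℕ, 1 ≤ n ∧ ∃ V : Fin n → Fin 3 → Bool,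
      (∀ j, ColMajority V j) ∧
      0 < matchCount V (fun _ => true) ∧
      ∀ p : Fin 3 → Bool, MajSupported V p →
        (matchCount V p : ℝ) ≤ (5 / 6 + ε) * matchCount V (fun _ => true) := by
  obtain ⟨m, hm⟩ := exists_nat_gt (3 / (2*ε))
  obtain ⟨k, hk1, hkR⟩ : ∃ k : ℕ, 1 ≤ k ∧ 3 / (2*ε) < (k:ℝ) :=
    ⟨m+1, by omega, lt_of_lt_of_le hm (by exact_mod_cast Nat.le_succ m)⟩
  have h2ε : (0:ℝ) < 2*ε := by linarith
  have hεk : (3:ℝ) < 2*ε*(k:ℝ) := by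
    have := (div_lt_iff₀ h2ε).mp hkR
    nlinarith
  have hk1R : (1:ℝ) ≤ (k:ℝ) := by exact_mod_cast hk1
  have hM : matchCount (Vk k) (fun _ => true) = 12*k+3 := by
    rw [matchCount_Vk]
    have e0 : agreeCount ![true,true,true] (fun _ => true) = 3 := by decide
    have e1 : agreeCount ![true,false,false] (fun _ => true) = 1 := by decide
    have e2 : agreeCount ![false,true,false] (fun _ => true) = 1 := by decide
    have e3 : agreeCount ![false,false,true] (fun _ => true) = 1 := by decide
    rw [e0, e1, e2, e3]; ring
  refine ⟨6*k+3, by omega, Vk k, ?_, ?_, ?_⟩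
  · intro j
    rw [ColMajority, colcard_Vk]
    omega
  · rw [hM]; omega
  · intro p hp
    have hpe : p = ![p 0, p 1, p 2] := (eta3 p).symm
    rw [hM]
    cases h0 : p 0 <;> cases h1 : p 1 <;> cases h2 : p 2 <;>
      rw [h0, h1, h2] at hpe <;> rw [hpe] at hp ⊢ <;>
      rw [MajSupported, supcard_Vk] at hp <;>
      rw [matchCount_Vk]
    · -- T = 0
      have e0 : agreeCount ![true,true,true] ![false,false,false] = 0 := by decide
      have e1 : agreeCount ![true,false,false] ![false,false,false] = 2 := by decide
      have e2 : agreeCount ![false,true,false] ![false,false,false] = 2 := by decide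
      have e3 : agreeCount ![false,false,true] ![false,false,false] = 2 := by decide
      rw [e0, e1, e2, e3]
      have hval : (3*k*0 + (k+1)*(2+2+2) : ℕ) = 6*k+6 := by ring
      rw [hval]
      push_cast
      nlinarith [mul_nonneg hε.le (by positivity : (0:ℝ) ≤ 12*(k:ℝ)+3)]
    · exfalso
      have s0 : (if Supports ![true,true,true] ![false,false,true] then 1 else 0) = 0 := by decide
      have s1 : (if Supports ![true,false,false] ![false,false,true] then 1 else 0) = 0 := by decide
      have s2 : (if Supports ![false,true,false] ![false,false,true] then 1 else 0) = 0 := by decide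
      have s3 : (if Supports ![false,false,true] ![false,false,true] then 1 else 0) = 1 := by decide
      rw [s0, s1, s2, s3] at hp
      omega
    · exfalso
      have s0 : (if Supports ![true,true,true] ![false,true,false] then 1 else 0) = 0 := by decide
      have s1 : (if Supports ![true,false,false] ![false,true,false] then 1 else 0) = 0 := by decide
      have s2 : (if Supports ![false,true,false] ![false,true,false] then 1 else 0) = 1 := by decide
      have s3 : (if Supports ![false,false,true] ![false,true,false] then 1 else 0) = 0 := by decide
      rw [s0, s1, s2, s3] at hp
      omega
    · -- T = 2
      have e0 : agreeCount ![true,true,true] ![false,true,true] = 2 := by decide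
      have e1 : agreeCount ![true,false,false] ![false,true,true] = 0 := by decide
      have e2 : agreeCount ![false,true,false] ![false,true,true] = 2 := by decide
      have e3 : agreeCount ![false,false,true] ![false,true,true] = 2 := by decide
      rw [e0, e1, e2, e3]
      have hval : (3*k*2 + (k+1)*(0+2+2) : ℕ) = 10*k+4 := by ring
      rw [hval]
      push_cast
      nlinarith [hεk, mul_nonneg hε.le (by positivity : (0:ℝ) ≤ 3*(1:ℝ))]
    · exfalso
      have s0 : (if Supports ![true,true,true] ![true,false,false] then 1 else 0) = 0 := by decide
      have s1 : (if Supports ![true,false,false] ![true,false,false] then 1 else 0) = 1 := by decide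
      have s2 : (if Supports ![false,true,false] ![true,false,false] then 1 else 0) = 0 := by decide
      have s3 : (if Supports ![false,false,true] ![true,false,false] then 1 else 0) = 0 := by decide
      rw [s0, s1, s2, s3] at hp
      omega
    · -- T = 2
      have e0 : agreeCount ![true,true,true] ![true,false,true] = 2 := by decide
      have e1 : agreeCount ![true,false,false] ![true,false,true] = 2 := by decide
      have e2 : agreeCount ![false,true,false] ![true,false,true] = 0 := by decide
      have e3 : agreeCount ![false,false,true] ![true,false,true] = 2 := by decide
      rw [e0, e1, e2, e3]
      have hval : (3*k*2 + (k+1)*(2+0+2) : ℕ) = 10*k+4 := by ring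
      rw [hval]
      push_cast
      nlinarith [hεk, mul_nonneg hε.le (by positivity : (0:ℝ) ≤ 3*(1:ℝ))]
    · -- T = 2
      have e0 : agreeCount ![true,true,true] ![true,true,false] = 2 := by decide
      have e1 : agreeCount ![true,false,false] ![true,true,false] = 2 := by decide
      have e2 : agreeCount ![false,true,false] ![true,true,false] = 2 := by decide
      have e3 : agreeCount ![false,false,true] ![true,true,false] = 0 := by decide
      rw [e0, e1, e2, e3]
      have hval : (3*k*2 + (k+1)*(2+2+0) : ℕ) = 10*k+4 := by ring
      rw [hval]
      push_cast
      nlinarith [hεk, mul_nonneg hε.le (by positivity : (0:ℝ) ≤ 3*(1:ℝ))]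
    · exfalso
      have s0 : (if Supports ![true,true,true] ![true,true,true] then 1 else 0) = 1 := by decide
      have s1 : (if Supports ![true,false,false] ![true,true,true] then 1 else 0) = 0 := by decide
      have s2 : (if Supports ![false,true,false] ![true,true,true] then 1 else 0) = 0 := by decide
      have s3 : (if Supports ![false,false,true] ![true,true,true] then 1 else 0) = 0 := by decide
      rw [s0, s1, s2, s3] at hp
      omega
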